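/- arXiv:2509.20685 — 2 statements merged into one kernel-verified Lean document; each statement's English description precedes it below -/
import Mathlib

section
/- Let E be a real Hilbert space, f : ℝ × E → ℝ a C¹ function, and b ∈ ℝ, σ > 0. Write ∇f_s for the gradient of f(s,·) and ∂_s f for the partial derivative in the first variable. Assume the strip estimate: for every s ∈ ℝ and every x ∈ E with b + σ/2 ≤ f(s,x) ≤ b + σ one has ‖∇f_s(x)‖² ≥ 2·∂_s f(s,x). Let x : ℝ → E be a C¹ curve solving the time-dependent negative gradient flow x'(s) = −∇f_s(x(s)) for all s, and suppose f(s₀, x(s₀)) < b + σ/2 for some s₀ ∈ ℝ. Then f(s, x(s)) ≤ b + σ for every s ≥ s₀. -/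
/-!
Along a flow line the action `g s = f (s, x s)` has derivative `∂_s f - ‖∇f_s‖²`, which is
nonpositive while the action lies in the strip `[b + σ/2, b + σ]`. An action starting below the
strip therefore cannot climb through it: it stays below a linear barrier rising from the bottom
of the strip to just under its top, since wherever the action touches the barrier its slope is
`≤ 0`, strictly less than the barrier's.
-/

theorem hasDerivAt_comp_graph {E : Type*} [NormedAddCommGroup E] [InnerProductSpace ℝ E]
    [CompleteSpace E] {f : ℝ × E → ℝ} {x : ℝ → E} {v : E} {s : ℝ}
    (hf : DifferentiableAt ℝ f (s, x s)) (hx : HasDerivAt x v s) :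
    HasDerivAt (fun t => f (t, x t))
      (deriv (fun t => f (t, x s)) s + inner ℝ (gradient (fun z => f (s, z)) (x s)) v) s := by
  have hF := hf.hasFDerivAt
  have htime : HasDerivAt (fun t => f (t, x s)) (fderiv ℝ f (s, x s) (1, 0)) s :=
    hF.comp_hasDerivAt s ((hasDerivAt_id s).prodMk (hasDerivAt_const s (x s)))
  have hspace : HasFDerivAt (fun z => f (s, z))
      ((fderiv ℝ f (s, x s)).comp (ContinuousLinearMap.inr ℝ ℝ E)) (x s) :=
    hF.comp (x s) (hasFDerivAt_prodMk_right s (x s))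
  have hsplit : fderiv ℝ f (s, x s) (1, v)
      = fderiv ℝ f (s, x s) (1, 0) + fderiv ℝ f (s, x s) (0, v) := by
    rw [← map_add, Prod.mk_add_mk, add_zero, zero_add]
  rw [htime.deriv, inner_gradient_left, hspace.fderiv, ContinuousLinearMap.comp_apply,
    ContinuousLinearMap.inr_apply, ← hsplit]
  exact hF.comp_hasDerivAt s ((hasDerivAt_id s).prodMk hx)

theorem lt_of_hasDerivAt_nonpos_on_band {g g' : ℝ → ℝ} {c C s₀ : ℝ} (hcC : c < C)
    (hg : ∀ s, HasDerivAt g (g' s) s) (hband : ∀ s, c ≤ g s → g s ≤ C → g' s ≤ 0)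
    (h₀ : g s₀ ≤ c) : ∀ s ≥ s₀, g s < C := by
  intro s₁ hs₁
  set k := (C - c) / (s₁ - s₀ + 1)
  have hk : 0 < k := div_pos (by linarith) (by linarith)
  have hk_span : k * (s₁ - s₀) < C - c := by
    calc k * (s₁ - s₀) < k * (s₁ - s₀ + 1) := by linarith
      _ = C - c := div_mul_cancel₀ _ (by linarith)
  have hbarrier : ∀ s, HasDerivAt (fun t => c + k * (t - s₀)) k s := fun s => by
    simpa using ((hasDerivAt_id s).sub_const s₀).const_mul k |>.const_add c
  have hle := image_le_of_deriv_right_lt_deriv_boundary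
    (fun t _ => (hg t).continuousAt.continuousWithinAt) (fun t _ => (hg t).hasDerivWithinAt)
    (by simpa using h₀) hbarrier
    (fun t ht hgt => (hband t (by nlinarith [ht.1]) (by nlinarith [ht.1, ht.2])).trans_lt hk)
    ⟨hs₁, le_rfl⟩
  linarith

/-- No-crossing lemma (upper bound): under the strip estimate
`‖∇f_s‖² ≥ 2·∂_s f` on `{b + σ/2 ≤ f_s ≤ b + σ}`, a negative gradient flow line
starting with action below `b + σ/2` never exceeds action `b + σ`. -/
theorem no_crossing_upper
    {E : Type*} [NormedAddCommGroup E] [InnerProductSpace ℝ E] [CompleteSpace E]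
    (f : ℝ × E → ℝ) (hf : ContDiff ℝ 1 f)
    (b σ : ℝ) (hσ : 0 < σ)
    (hstrip : ∀ s : ℝ, ∀ y : E, b + σ / 2 ≤ f (s, y) → f (s, y) ≤ b + σ →
      ‖gradient (fun z => f (s, z)) y‖ ^ 2 ≥ 2 * deriv (fun t => f (t, y)) s)
    (x : ℝ → E)
    (hx : ∀ s, HasDerivAt x (-gradient (fun z => f (s, z)) (x s)) s)
    (s₀ : ℝ) (h₀ : f (s₀, x s₀) < b + σ / 2) :
    ∀ s ≥ s₀, f (s, x s) ≤ b + σ := by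
  have hdiff : Differentiable ℝ f := hf.differentiable one_ne_zero
  have haction : ∀ s, HasDerivAt (fun t => f (t, x t))
      (deriv (fun t => f (t, x s)) s - ‖gradient (fun z => f (s, z)) (x s)‖ ^ 2) s := fun s => by
    simpa only [inner_neg_right, real_inner_self_eq_norm_sq, ← sub_eq_add_neg]
      using hasDerivAt_comp_graph hdiff.differentiableAt (hx s)
  intro s hs
  refine (lt_of_hasDerivAt_nonpos_on_band (by linarith) haction (fun t hlo hhi => ?_) h₀.le s hs).le
  nlinarith [hstrip t (x t) hlo hhi, sq_nonneg ‖gradient (fun z => f (t, z)) (x t)‖]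
end

section
/- Let E be a real Hilbert space, f : ℝ × E → ℝ a C¹ function, and a ∈ ℝ, σ > 0. Write ∇f_s for the gradient of f(s,·) and ∂_s f for the partial derivative in the first variable. Assume the strip estimate: for every s ∈ ℝ and every x ∈ E with a − σ ≤ f(s,x) ≤ a − σ/2 one has ‖∇f_s(x)‖² ≥ 2·∂_s f(s,x). Let x : ℝ → E be a C¹ curve solving the time-dependent negative gradient flow x'(s) = −∇f_s(x(s)) for all s, and suppose f(s₀, x(s₀)) > a − σ/2 for some s₀ ∈ ℝ. Then f(s, x(s)) ≥ a − σ for every s ≤ s₀. -/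
/-!
Along the flow, the chain rule gives the energy identity
`d/ds f(s, x(s)) = ∂_s f(s, x(s)) − ‖∇f_s(x(s))‖²`, which the strip estimate makes nonpositive
whenever the action lies in `[a − σ, a − σ/2]`. If the action were below `a − σ` at some
`s ≤ s₀`, then between the last time it is `≤ a − σ` and the first later time it is `≥ a − σ/2`
it would stay inside the strip and hence not increase, yet it would rise by at least `σ/2`.
-/

open Set
open scoped RealInnerProductSpace

section Crossing

variable {g : ℝ → ℝ} {a b α β : ℝ}

lemma exists_first_ge_of_continuousOn (hab : a ≤ b) (hg : ContinuousOn g (Icc a b))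
    (hb : β ≤ g b) : ∃ u ∈ Icc a b, β ≤ g u ∧ ∀ s ∈ Ico a u, g s < β := by
  have hS : IsCompact (Icc a b ∩ g ⁻¹' Ici β) :=
    isCompact_Icc.of_isClosed_subset (hg.preimage_isClosed_of_isClosed isClosed_Icc isClosed_Ici)
      inter_subset_left
  obtain ⟨u, ⟨hu, hgu⟩, hleast⟩ := hS.exists_isLeast ⟨b, ⟨hab, le_rfl⟩, hb⟩
  refine ⟨u, hu, hgu, fun s hs => lt_of_not_ge fun hgs => ?_⟩
  exact (hleast ⟨⟨hs.1, hs.2.le.trans hu.2⟩, hgs⟩).not_gt hs.2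

lemma exists_last_le_of_continuousOn (hab : a ≤ b) (hg : ContinuousOn g (Icc a b))
    (ha : g a ≤ α) : ∃ t ∈ Icc a b, g t ≤ α ∧ ∀ s ∈ Ioc t b, α < g s := by
  have hS : IsCompact (Icc a b ∩ g ⁻¹' Iic α) :=
    isCompact_Icc.of_isClosed_subset (hg.preimage_isClosed_of_isClosed isClosed_Icc isClosed_Iic)
      inter_subset_left
  obtain ⟨t, ⟨ht, hgt⟩, hgreatest⟩ := hS.exists_isGreatest ⟨a, ⟨le_rfl, hab⟩, ha⟩
  refine ⟨t, ht, hgt, fun s hs => lt_of_not_ge fun hgs => ?_⟩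
  exact (hgreatest ⟨⟨ht.1.trans hs.1.le, hs.2⟩, hgs⟩).not_gt hs.1

lemma exists_Ioo_mapsTo_Ioo_of_continuousOn (hab : a ≤ b) (hg : ContinuousOn g (Icc a b))
    (ha : g a ≤ α) (hb : β ≤ g b) :
    ∃ t u, a ≤ t ∧ t ≤ u ∧ u ≤ b ∧ g t ≤ α ∧ β ≤ g u ∧ MapsTo g (Ioo t u) (Ioo α β) := by
  obtain ⟨u, hu, hgu, hbelow⟩ := exists_first_ge_of_continuousOn hab hg hb
  obtain ⟨t, ht, hgt, habove⟩ :=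
    exists_last_le_of_continuousOn hu.1 (hg.mono (Icc_subset_Icc_right hu.2)) ha
  exact ⟨t, u, ht.1, ht.2, hu.2, hgt, hgu, fun s hs =>
    ⟨habove s ⟨hs.1, hs.2.le⟩, hbelow s ⟨ht.1.trans hs.1.le, hs.2⟩⟩⟩

lemma le_of_hasDerivAt_nonpos_on_strip {g' : ℝ → ℝ} (hg : ∀ s, HasDerivAt g (g' s) s)
    (hstrip : ∀ s, g s ∈ Ioo α β → g' s ≤ 0) (hαβ : α < β) {s s₀ : ℝ} (hs : s ≤ s₀)
    (h₀ : β < g s₀) : α ≤ g s := by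
  by_contra! hlt
  have hcont : Continuous g := continuous_iff_continuousAt.2 fun s => (hg s).continuousAt
  obtain ⟨t, u, -, htu, -, hgt, hgu, hmaps⟩ :=
    exists_Ioo_mapsTo_Ioo_of_continuousOn hs hcont.continuousOn hlt.le h₀.le
  have hanti : AntitoneOn g (Icc t u) := by
    refine antitoneOn_of_hasDerivWithinAt_nonpos (convex_Icc t u) hcont.continuousOn
      (fun r _ => (hg r).hasDerivWithinAt) fun r hr => ?_
    rw [interior_Icc] at hr
    exact hstrip r (hmaps hr)
  have := hanti ⟨le_rfl, htu⟩ ⟨htu, le_rfl⟩ htu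
  linarith

end Crossing

section GradientFlow

variable {E : Type*} [NormedAddCommGroup E] [InnerProductSpace ℝ E] [CompleteSpace E]
  {f : ℝ × E → ℝ} {x : ℝ → E} {s : ℝ}

lemma DifferentiableAt.hasDerivAt_comp_prodMk {x' : E} (hf : DifferentiableAt ℝ f (s, x s))
    (hx : HasDerivAt x x' s) :
    HasDerivAt (fun t => f (t, x t))
      (deriv (fun t => f (t, x s)) s + ⟪gradient (fun z => f (s, z)) (x s), x'⟫) s := by
  have hF := hf.hasFDerivAt
  have htime : deriv (fun t => f (t, x s)) s = fderiv ℝ f (s, x s) (1, 0) :=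
    (hF.comp_hasDerivAt s ((hasDerivAt_id s).prodMk (hasDerivAt_const s (x s)))).deriv
  have hspace : HasFDerivAt (fun z => f (s, z))
      ((fderiv ℝ f (s, x s)).comp (ContinuousLinearMap.inr ℝ ℝ E)) (x s) :=
    hF.comp (x s) (hasFDerivAt_prodMk_right s (x s))
  have hsplit : ((1 : ℝ), x') = (1, 0) + (0, x') := by simp
  refine (hF.comp_hasDerivAt s ((hasDerivAt_id s).prodMk hx)).congr_deriv ?_
  rw [htime, inner_gradient_left, hspace.fderiv, hsplit, map_add]
  rfl

lemma DifferentiableAt.hasDerivAt_comp_prodMk_of_neg_gradient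
    (hf : DifferentiableAt ℝ f (s, x s))
    (hx : HasDerivAt x (-gradient (fun z => f (s, z)) (x s)) s) :
    HasDerivAt (fun t => f (t, x t))
      (deriv (fun t => f (t, x s)) s - ‖gradient (fun z => f (s, z)) (x s)‖ ^ 2) s := by
  refine (hf.hasDerivAt_comp_prodMk hx).congr_deriv ?_
  rw [inner_neg_right, real_inner_self_eq_norm_sq, sub_eq_add_neg]

end GradientFlow

/-- No-crossing lemma (lower bound): under the strip estimate
`‖∇f_s‖² ≥ 2·∂_s f` on `{a − σ ≤ f_s ≤ a − σ/2}`, a negative gradient flow line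
ending with action above `a − σ/2` never had action below `a − σ`. -/
theorem no_crossing_lower
    {E : Type*} [NormedAddCommGroup E] [InnerProductSpace ℝ E] [CompleteSpace E]
    (f : ℝ × E → ℝ) (hf : ContDiff ℝ 1 f)
    (a σ : ℝ) (hσ : 0 < σ)
    (hstrip : ∀ s : ℝ, ∀ y : E, a - σ ≤ f (s, y) → f (s, y) ≤ a - σ / 2 →
      ‖gradient (fun z => f (s, z)) y‖ ^ 2 ≥ 2 * deriv (fun t => f (t, y)) s)
    (x : ℝ → E)
    (hx : ∀ s, HasDerivAt x (-gradient (fun z => f (s, z)) (x s)) s)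
    (s₀ : ℝ) (h₀ : f (s₀, x s₀) > a - σ / 2) :
    ∀ s ≤ s₀, f (s, x s) ≥ a - σ := by
  intro s hs
  have hfd : Differentiable ℝ f := hf.differentiable one_ne_zero
  refine le_of_hasDerivAt_nonpos_on_strip
    (fun t => (hfd _).hasDerivAt_comp_prodMk_of_neg_gradient (hx t)) (fun t ht => ?_)
    (by linarith) hs h₀
  have hgrad := hstrip t (x t) ht.1.le ht.2.le
  have := sq_nonneg ‖gradient (fun z => f (t, z)) (x t)‖
  linarith
end
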